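/- Let N be a nest on a Hilbert space H containing a strictly decreasing sequence of subspaces N₀ > N₁ > N₂ > ⋯. Then the right topological stable rank of the nest algebra T(N) is infinite. -/

import Mathlib

/-- `n`-tuples generating `A` as a left ideal. -/
noncomputable def Lg (A : Type*) [NormedRing A] (n : ℕ) : Set (Fin n → A) :=
  {a | ∃ b : Fin n → A, ∑ i, b i * a i = 1}

/-- `n`-tuples generating `A` as a right ideal. -/
noncomputable def Rg (A : Type*) [NormedRing A] (n : ℕ) : Set (Fin n → A) :=
  {a | ∃ b : Fin n → A, ∑ i, a i * b i = 1}

/-- The left topological stable rank. -/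
noncomputable def ltsr (A : Type*) [NormedRing A] : ℕ∞ :=
  sInf {N : ℕ∞ | ∃ n : ℕ, N = n ∧ Dense (Lg A n)}

/-- The right topological stable rank. -/
noncomputable def rtsr (A : Type*) [NormedRing A] : ℕ∞ :=
  sInf {N : ℕ∞ | ∃ n : ℕ, N = n ∧ Dense (Rg A n)}


/-- A nest: a chain of closed subspaces containing `{0}` and `H`, closed under
intersections and closed linear spans. -/
structure IsNest {H : Type*} [NormedAddCommGroup H] [InnerProductSpace ℂ H]
    (𝒩 : Set (Submodule ℂ H)) : Prop where
  isClosed : ∀ N ∈ 𝒩, IsClosed (N : Set H)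
  isChain : IsChain (· ≤ ·) 𝒩
  bot_mem : ⊥ ∈ 𝒩
  top_mem : ⊤ ∈ 𝒩
  sInf_mem : ∀ S ⊆ 𝒩, S.Nonempty → sInf S ∈ 𝒩
  span_mem : ∀ S ⊆ 𝒩, S.Nonempty → (sSup S).topologicalClosure ∈ 𝒩

/-- The nest algebra of all bounded operators leaving every subspace of `𝒩` invariant. -/
noncomputable def nestAlgebra {H : Type*} [NormedAddCommGroup H] [InnerProductSpace ℂ H]
    (𝒩 : Set (Submodule ℂ H)) : Subalgebra ℂ (H →L[ℂ] H) where
  carrier := {T | ∀ N ∈ 𝒩, ∀ x ∈ N, T x ∈ N}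
  mul_mem' := fun hT hS N hN x hx => hT N hN _ (hS N hN x hx)
  add_mem' := fun hT hS N hN x hx => N.add_mem (hT N hN x hx) (hS N hN x hx)
  algebraMap_mem' := fun c N hN x hx => by
    simpa [Algebra.algebraMap_eq_smul_one] using N.smul_mem c hx

/-!
Let `N∞ = ⨅ k, N k` and `K = N 0 ⊓ N∞ᗮ`, the closed span of the layers `N k ⊓ (N (k+1))ᗮ`.
Pick unit vectors `e k` in the layers and a Hilbert basis of `K` made of vectors lying in layers;
it is countable because `H` is separable. Sending the basis vectors of layer `d` injectively to
vectors `e m` with `m > d`, using `n` disjoint sets of targets, gives partial isometries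
`T 0, …, T (n-1)` with initial space `K` and mutually orthogonal ranges which map `N (k-1)` into
`N k`; such operators lie in the nest algebra.

Suppose `∑ i, a i * b i = 1` with `‖a i - T i‖ ≤ ε`. Split `b i (e 0) = u i + v i` with
`u i ∈ N∞` and `v i ∈ K`; then `e 0 = U + V + W` with `U ∈ N∞`, `V = ∑ i, T i (v i)` orthogonal
to `U` and `e 0`, and `‖W‖ ≤ ε s` where `s = ∑ i, ‖v i‖`. Pairing with `e 0` gives `1 ≤ ‖W‖`,
pairing with `V` gives `‖V‖ ≤ ‖W‖`, and `s ^ 2 ≤ n ∑ i, ‖v i‖ ^ 2 = n ‖V‖ ^ 2`. Hence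
`1 ≤ n ε ^ 2`, so no right invertible `n`-tuple lies within `1 / (n + 1)` of `T`.
-/

open scoped InnerProductSpace

theorem HasSum.mem_of_smul {R M ι : Type*} [Semiring R] [AddCommMonoid M] [Module R M]
    [TopologicalSpace M] {C : Submodule R M} (hC : IsClosed (C : Set M)) {c : ι → R}
    {v : ι → M} {y : M} (h : HasSum (fun i => c i • v i) y) (hv : ∀ i, c i ≠ 0 → v i ∈ C) :
    y ∈ C := by
  refine hC.mem_of_tendsto h (Filter.Eventually.of_forall fun s => C.sum_mem fun i _ => ?_)
  by_cases hci : c i = 0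
  · simp [hci]
  · exact C.smul_mem _ (hv i hci)

theorem Nat.exists_injective_le {α : Type*} [Countable α] (f : α → ℕ) :
    ∃ g : α → ℕ, Function.Injective g ∧ ∀ a, f a ≤ g a := by
  obtain ⟨enc, henc⟩ := exists_injective_nat α
  exact ⟨fun a => Nat.pair (f a) (enc a), fun a b h => henc (Nat.pair_eq_pair.1 h).2,
    fun a => Nat.left_le_pair _ _⟩

section InnerProductSpace

variable {𝕜 E : Type*} [RCLike 𝕜] [NormedAddCommGroup E] [InnerProductSpace 𝕜 E]

theorem Orthonormal.countable [TopologicalSpace.SeparableSpace E] {ι : Type*} {v : ι → E}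
    (hv : Orthonormal 𝕜 v) : Countable ι := by
  refine Pairwise.countable_of_isOpen_disjoint (s := fun i => Metric.ball (v i) (1 / 2))
    (fun i j hij => Metric.ball_disjoint_ball ?_) (fun _ => Metric.isOpen_ball)
    (fun i => ⟨v i, Metric.mem_ball_self (by norm_num)⟩)
  have hsq : dist (v i) (v j) ^ 2 = 2 := by
    rw [dist_eq_norm, @norm_sub_sq 𝕜, hv.1 i, hv.1 j, hv.2 hij]
    norm_num
  nlinarith [dist_nonneg (x := v i) (y := v j)]

theorem norm_sum_sq_eq_sum_norm_sq {ι : Type*} [DecidableEq ι] (s : Finset ι) {y : ι → E}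
    (hy : Pairwise fun i j => ⟪y i, y j⟫_𝕜 = 0) :
    ‖∑ i ∈ s, y i‖ ^ 2 = ∑ i ∈ s, ‖y i‖ ^ 2 := by
  induction s using Finset.induction_on with
  | empty => simp
  | insert a s ha ih =>
    have horth : ⟪y a, ∑ i ∈ s, y i⟫_𝕜 = 0 := by
      rw [inner_sum]
      exact Finset.sum_eq_zero fun i hi => hy (ne_of_mem_of_not_mem hi ha).symm
    rw [Finset.sum_insert ha, Finset.sum_insert ha, ← ih, sq, sq, sq,
      norm_add_sq_eq_norm_sq_add_norm_sq_of_inner_eq_zero _ _ horth]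

theorem HilbertBasis.mem_orthogonal_of_inner_eq_zero {ι : Type*} {V : Submodule 𝕜 E}
    (b : HilbertBasis ι 𝕜 V) {z : E} (h : ∀ i, ⟪(b i : E), z⟫_𝕜 = 0) : z ∈ Vᗮ := by
  refine (Submodule.mem_orthogonal _ _).2 fun y hy => ?_
  have hsum := (b.hasSum_repr ⟨y, hy⟩).mapL V.subtypeL
  simp only [map_smul, Submodule.subtypeL_apply] at hsum
  exact Submodule.mem_orthogonal_singleton_iff_inner_left.1 <|
    hsum.mem_of_smul (Submodule.isClosed_orthogonal _) fun i _ =>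
      Submodule.mem_orthogonal_singleton_iff_inner_left.2 (h i)

end InnerProductSpace

namespace HilbertBasis

variable {𝕜 E F ι ι' : Type*} [RCLike 𝕜] [NormedAddCommGroup E] [InnerProductSpace 𝕜 E]
  [NormedAddCommGroup F] [InnerProductSpace 𝕜 F] [CompleteSpace F]
  {K : Submodule 𝕜 E} [K.HasOrthogonalProjection] (b : HilbertBasis ι 𝕜 K)
  {v : ι → F} (hv : Orthonormal 𝕜 v)

noncomputable def partialIsometry : E →L[𝕜] F :=
  (hv.orthogonalFamily.linearIsometry.comp b.repr.toLinearIsometry).toContinuousLinearMap ∘L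
    K.orthogonalProjectionOnto

theorem hasSum_partialIsometry (x : E) :
    HasSum (fun j => ⟪(b j : E), x⟫_𝕜 • v j) (b.partialIsometry hv x) := by
  simpa [partialIsometry, b.repr_apply_apply] using
    hv.orthogonalFamily.hasSum_linearIsometry (b.repr (K.orthogonalProjectionOnto x))

theorem norm_partialIsometry_apply {x : E} (hx : x ∈ K) : ‖b.partialIsometry hv x‖ = ‖x‖ := by
  simp [partialIsometry, K.norm_orthogonalProjectionOnto_apply hx]

theorem partialIsometry_apply_of_mem_orthogonal {x : E} (hx : x ∈ Kᗮ) :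
    b.partialIsometry hv x = 0 := by
  simp [partialIsometry, K.orthogonalProjectionOnto_apply_of_mem_orthogonal hx]

theorem inner_partialIsometry_eq_zero {K' : Submodule 𝕜 E} [K'.HasOrthogonalProjection]
    (b' : HilbertBasis ι' 𝕜 K') {v' : ι' → F} (hv' : Orthonormal 𝕜 v')
    (hvv' : ∀ j j', ⟪v j, v' j'⟫_𝕜 = 0) (x y : E) :
    ⟪b.partialIsometry hv x, b'.partialIsometry hv' y⟫_𝕜 = 0 := by
  have hy : ∀ j, b'.partialIsometry hv' y ∈ (𝕜 ∙ v j)ᗮ := fun j =>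
    (b'.hasSum_partialIsometry hv' y).mem_of_smul (Submodule.isClosed_orthogonal _)
      fun j' _ => Submodule.mem_orthogonal_singleton_iff_inner_right.2 (hvv' j j')
  have hx : b.partialIsometry hv x ∈ (𝕜 ∙ b'.partialIsometry hv' y)ᗮ :=
    (b.hasSum_partialIsometry hv x).mem_of_smul (Submodule.isClosed_orthogonal _) fun j _ =>
      Submodule.mem_orthogonal_singleton_iff_inner_left.2
        (Submodule.mem_orthogonal_singleton_iff_inner_right.1 (hy j))
  exact Submodule.mem_orthogonal_singleton_iff_inner_left.1 hx

end HilbertBasis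

namespace Submodule

universe u

variable {𝕜 : Type*} {E : Type u} [RCLike 𝕜] [NormedAddCommGroup E] [InnerProductSpace 𝕜 E]
  {N : ℕ → Submodule 𝕜 E}

variable (N) in
def layer (k : ℕ) : Submodule 𝕜 E := N k ⊓ (N (k + 1))ᗮ

theorem inner_eq_zero_of_mem_layer (hN : Antitone N) {j k : ℕ} (hjk : j < k) {x y : E}
    (hx : x ∈ layer N j) (hy : y ∈ N k) : ⟪x, y⟫_𝕜 = 0 :=
  (mem_orthogonal' _ _).1 hx.2 y (hN hjk hy)

theorem isOrtho_layer (hN : Antitone N) {j k : ℕ} (hjk : j ≠ k) : layer N j ⟂ layer N k := by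
  rw [isOrtho_iff_inner_eq]
  intro x hx y hy
  rcases hjk.lt_or_gt with h | h
  · exact inner_eq_zero_of_mem_layer hN h hx hy.1
  · exact inner_eq_zero_symm.1 (inner_eq_zero_of_mem_layer hN h hy hx.1)

theorem sub_starProjection_mem_layer (hN : Antitone N) {k : ℕ}
    [(N (k + 1)).HasOrthogonalProjection] {x : E} (hx : x ∈ N k) :
    x - (N (k + 1)).starProjection x ∈ layer N k :=
  ⟨sub_mem hx (hN k.le_succ (starProjection_apply_mem _ x)), sub_starProjection_mem_orthogonal x⟩

theorem mem_iInf_of_inner_layer_eq_zero [CompleteSpace E] (hN : Antitone N)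
    (hcl : ∀ k, IsClosed (N k : Set E)) {z : E} (hz : z ∈ N 0)
    (h : ∀ k, ∀ y ∈ layer N k, ⟪y, z⟫_𝕜 = 0) : z ∈ ⨅ k, N k := by
  refine mem_iInf _ |>.2 fun k => ?_
  induction k with
  | zero => exact hz
  | succ k ih =>
    have := (hcl (k + 1)).completeSpace_coe
    have hr := sub_starProjection_mem_layer hN ih
    have hr0 : z - (N (k + 1)).starProjection z = 0 := by
      rw [← inner_self_eq_zero (𝕜 := 𝕜), inner_sub_right, h k _ hr,
        inner_left_of_mem_orthogonal (starProjection_apply_mem _ z) hr.2, sub_zero]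
    rw [sub_eq_zero.1 hr0]
    exact starProjection_apply_mem _ z

theorem exists_norm_eq_one_mem_layer [CompleteSpace E] (hN : StrictAnti N)
    (hcl : ∀ k, IsClosed (N k : Set E)) (k : ℕ) : ∃ x ∈ layer N k, ‖x‖ = 1 := by
  have := (hcl (k + 1)).completeSpace_coe
  obtain ⟨x, hxk, hxk1⟩ := SetLike.exists_of_lt (hN k.lt_succ_self)
  have hd : x - (N (k + 1)).starProjection x ≠ 0 := by
    rw [sub_ne_zero]
    exact fun h => hxk1 (h ▸ starProjection_apply_mem _ x)
  exact ⟨_, smul_mem _ _ (sub_starProjection_mem_layer hN.antitone hxk), norm_smul_inv_norm hd⟩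

theorem exists_orthonormal_mem_layer [CompleteSpace E] (hN : StrictAnti N)
    (hcl : ∀ k, IsClosed (N k : Set E)) :
    ∃ e : ℕ → E, Orthonormal 𝕜 e ∧ ∀ k, e k ∈ layer N k := by
  choose e he using exists_norm_eq_one_mem_layer hN hcl
  exact ⟨e, ⟨fun k => (he k).2, fun j k hjk =>
    (isOrtho_layer hN.antitone hjk).inner_eq (he j).1 (he k).1⟩, fun k => (he k).1⟩

theorem exists_hilbertBasis_mem_layer [CompleteSpace E] [TopologicalSpace.SeparableSpace E]
    (hN : Antitone N) (hcl : ∀ k, IsClosed (N k : Set E)) :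
    ∃ (ι : Type u) (_ : Countable ι) (d : ι → ℕ) (b : HilbertBasis ι 𝕜 ↥(N 0 ⊓ (⨅ k, N k)ᗮ)),
      ∀ j, (b j : E) ∈ layer N (d j) := by
  have (k : ℕ) : CompleteSpace (layer N k) :=
    ((hcl k).inter (isClosed_orthogonal _)).completeSpace_coe
  have : CompleteSpace ↥(N 0 ⊓ (⨅ k, N k)ᗮ) :=
    ((hcl 0).inter (isClosed_orthogonal _)).completeSpace_coe
  choose w b _ using fun k => exists_hilbertBasis 𝕜 (layer N k)
  let g : (Σ k, w k) → E := fun j => b j.1 j.2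
  have hg : Orthonormal 𝕜 g :=
    (orthogonalFamily_iff_pairwise.2 fun _ _ hjk =>
      isOrtho_layer hN hjk).orthonormal_sigma_orthonormal fun k => (b k).orthonormal
  have hgK (j : Σ k, w k) : g j ∈ N 0 ⊓ (⨅ k, N k)ᗮ :=
    ⟨hN (Nat.zero_le _) (b j.1 j.2).2.1, orthogonal_le (iInf_le _ (j.1 + 1)) (b j.1 j.2).2.2⟩
  refine ⟨_, hg.countable, Sigma.fst, .mkOfOrthogonalEqBot (hg.codRestrict _ hgK) ?_,
    fun j => by rw [HilbertBasis.coe_mkOfOrthogonalEqBot]; exact (b j.1 j.2).2⟩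
  refine eq_bot_iff.2 fun z hz => (mem_bot 𝕜).2 (Subtype.ext ?_)
  have hzg (j : Σ k, w k) : ⟪g j, (z : E)⟫_𝕜 = 0 :=
    (mem_orthogonal _ _).1 hz _ (subset_span ⟨j, rfl⟩)
  have hz_iInf : (z : E) ∈ ⨅ k, N k := mem_iInf_of_inner_layer_eq_zero hN hcl z.2.1
    fun k => (mem_orthogonal _ _).1 <| (b k).mem_orthogonal_of_inner_eq_zero fun i => hzg ⟨k, i⟩
  exact inner_self_eq_zero.1 (inner_left_of_mem_orthogonal hz_iInf z.2.2)

theorem exists_shift_operators [CompleteSpace E] [TopologicalSpace.SeparableSpace E]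
    (hN : Antitone N) (hcl : ∀ k, IsClosed (N k : Set E)) {e : ℕ → E} (he : Orthonormal 𝕜 e)
    (heN : ∀ m, e m ∈ layer N m) (n : ℕ) :
    ∃ T : Fin n → E →L[𝕜] E,
      (∀ i k x, (∀ j < k, x ∈ N j) → T i x ∈ N k) ∧
      (∀ i x, (∀ k, x ∈ N k) → T i x = 0) ∧
      (∀ i, ∀ x ∈ N 0 ⊓ (⨅ k, N k)ᗮ, ‖T i x‖ = ‖x‖) ∧
      (∀ i x, T i x ∈ (⨅ k, N k)ᗮ) ∧
      Pairwise fun i i' => ∀ x y, ⟪T i x, T i' y⟫_𝕜 = 0 := by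
  have : CompleteSpace ↥(N 0 ⊓ (⨅ k, N k)ᗮ) :=
    ((hcl 0).inter (isClosed_orthogonal _)).completeSpace_coe
  obtain ⟨ι, _, d, b, hb⟩ := exists_hilbertBasis_mem_layer hN hcl
  -- `T i` sends the `j`-th basis vector to `e (Φ (i, j))`, and `Φ (i, j) > d j`
  obtain ⟨Φ, hΦ, hΦd⟩ := Nat.exists_injective_le fun p : Fin n × ι => d p.2 + 1
  have hv (i : Fin n) : Orthonormal 𝕜 fun j => e (Φ (i, j)) :=
    he.comp _ (hΦ.comp (Prod.mk_right_injective i))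
  refine ⟨fun i => b.partialIsometry (hv i), fun i k x hx => ?_, fun i x hx => ?_,
    fun i x hx => b.norm_partialIsometry_apply (hv i) hx, fun i x => ?_, fun i i' hii' x y => ?_⟩
  · refine (b.hasSum_partialIsometry (hv i) x).mem_of_smul (hcl k) fun j hj => hN ?_ (heN _).1
    by_contra! hlt
    exact hj (inner_eq_zero_of_mem_layer hN (Nat.lt_succ_self _) (hb j)
      (hx _ ((hΦd (i, j)).trans_lt hlt)))
  · refine b.partialIsometry_apply_of_mem_orthogonal (hv i) ?_
    refine orthogonal_le inf_le_right (le_orthogonal_orthogonal _ ?_)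
    exact mem_iInf _ |>.2 hx
  · exact (b.hasSum_partialIsometry (hv i) x).mem_of_smul (isClosed_orthogonal _) fun j _ =>
      orthogonal_le (iInf_le _ _) (heN _).2
  · exact b.inner_partialIsometry_eq_zero (hv i) b (hv i') (fun j j' =>
      he.2 (hΦ.ne (by simp [hii']))) x y

end Submodule

section Perturbation

variable {𝕜 E : Type*} [RCLike 𝕜] [NormedAddCommGroup E] [InnerProductSpace 𝕜 E]

theorem one_le_card_mul_sq_of_add_sum_eq {n : ℕ} {ε : ℝ} {e U : E} {y z : Fin n → E}
    (he : ‖e‖ = 1) (hUe : ⟪U, e⟫_𝕜 = 0) (hye : ∀ i, ⟪y i, e⟫_𝕜 = 0)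
    (hyU : ∀ i, ⟪y i, U⟫_𝕜 = 0) (hy : Pairwise fun i j => ⟪y i, y j⟫_𝕜 = 0)
    (hz : ∀ i, ‖z i - y i‖ ≤ ε * ‖y i‖) (hsum : U + ∑ i, z i = e) : 1 ≤ n * ε ^ 2 := by
  set V := ∑ i, y i
  set W := ∑ i, (z i - y i)
  set s := ∑ i, ‖y i‖
  have he_eq : e = U + V + W := by
    rw [← hsum, add_assoc, ← Finset.sum_add_distrib]
    simp
  have hW : ‖W‖ ≤ ε * s := (norm_sum_le _ _).trans <| by
    rw [Finset.mul_sum]; exact Finset.sum_le_sum fun i _ => hz i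
  have hVe : ⟪V, e⟫_𝕜 = 0 := by simp [V, sum_inner, hye]
  have hVU : ⟪V, U⟫_𝕜 = 0 := by simp [V, sum_inner, hyU]
  have hWe : ⟪W, e⟫_𝕜 = 1 := by
    have h := congrArg (⟪·, e⟫_𝕜) he_eq
    simp only [inner_add_left, hUe, hVe, inner_self_eq_norm_sq_to_K, he] at h
    simpa using h.symm
  have hVV : ⟪V, V⟫_𝕜 = ⟪V, -W⟫_𝕜 := by
    have h := congrArg (⟪V, ·⟫_𝕜) he_eq
    simp only [inner_add_right, hVe, hVU] at h
    rw [inner_neg_right]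
    linear_combination -h
  have h1W : 1 ≤ ‖W‖ := by
    have := re_inner_le_norm (𝕜 := 𝕜) W e
    rw [hWe, he] at this
    simpa using this
  have hVW : ‖V‖ ≤ ‖W‖ := by
    have h := re_inner_le_norm (𝕜 := 𝕜) V (-W)
    rw [← hVV, inner_self_eq_norm_sq (𝕜 := 𝕜), norm_neg] at h
    nlinarith [norm_nonneg V, norm_nonneg W]
  have hs : 0 < s := by
    by_contra! hs
    have hs0 : s = 0 := le_antisymm hs (Finset.sum_nonneg fun i _ => norm_nonneg (y i))
    rw [hs0, mul_zero] at hW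
    linarith
  have hsV : s ^ 2 ≤ n * ‖V‖ ^ 2 := by
    classical
    rw [norm_sum_sq_eq_sum_norm_sq _ hy]
    simpa using sq_sum_le_card_mul_sum_sq (s := Finset.univ) (f := fun i => ‖y i‖)
  have : 1 * s ^ 2 ≤ n * ε ^ 2 * s ^ 2 := calc
    1 * s ^ 2 ≤ n * ‖V‖ ^ 2 := by rw [one_mul]; exact hsV
    _ ≤ n * (ε * s) ^ 2 := by gcongr; exact hVW.trans hW
    _ = n * ε ^ 2 * s ^ 2 := by ring
  exact le_of_mul_le_mul_right this (by positivity)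

theorem one_le_card_mul_sq_of_sum_mul_eq_one {n : ℕ} {L M : Submodule 𝕜 E}
    [L.HasOrthogonalProjection] (hLM : L ≤ M) {e : E} (he : ‖e‖ = 1) (heL : e ∈ Lᗮ)
    {T : Fin n → E →L[𝕜] E} (hT_norm : ∀ i, ∀ x ∈ M ⊓ Lᗮ, ‖T i x‖ = ‖x‖)
    (hT_e : ∀ i, ∀ x ∈ M, ⟪T i x, e⟫_𝕜 = 0) (hT_L : ∀ i x, T i x ∈ Lᗮ)
    (hT_orth : Pairwise fun i j => ∀ x y, ⟪T i x, T j y⟫_𝕜 = 0)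
    {a b : Fin n → E →L[𝕜] E} (ha_L : ∀ i, ∀ x ∈ L, a i x ∈ L) (hb_M : ∀ i, b i e ∈ M)
    {ε : ℝ} (ha : ∀ i, ‖a i - T i‖ ≤ ε) (hab : ∑ i, a i * b i = 1) : 1 ≤ n * ε ^ 2 := by
  set u : Fin n → E := fun i => L.starProjection (b i e)
  set v : Fin n → E := fun i => b i e - u i
  have hv (i : Fin n) : v i ∈ M ⊓ Lᗮ :=
    ⟨M.sub_mem (hb_M i) (hLM (L.starProjection_apply_mem _)),
      L.sub_starProjection_mem_orthogonal _⟩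
  have hU : ∑ i, a i (u i) ∈ L := L.sum_mem fun i _ => ha_L i _ (L.starProjection_apply_mem _)
  refine one_le_card_mul_sq_of_add_sum_eq he (U := ∑ i, a i (u i)) (y := fun i => T i (v i))
    (z := fun i => a i (v i)) (Submodule.inner_right_of_mem_orthogonal hU heL)
    (fun i => hT_e i _ (hv i).1) (fun i => Submodule.inner_left_of_mem_orthogonal hU (hT_L i _))
    (fun i j hij => hT_orth hij _ _) (fun i => ?_) ?_
  · calc ‖a i (v i) - T i (v i)‖ = ‖(a i - T i) (v i)‖ := rfl
      _ ≤ ‖a i - T i‖ * ‖v i‖ := (a i - T i).le_opNorm _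
      _ ≤ ε * ‖T i (v i)‖ := by rw [hT_norm i _ (hv i)]; gcongr; exact ha i
  · have h := congrArg (fun S : E →L[𝕜] E => S e) hab
    simp only [sum_apply, mul_apply_eq_comp, one_apply_eq_self] at h
    rw [← h, ← Finset.sum_add_distrib]
    exact Finset.sum_congr rfl fun i _ => by rw [← map_add, add_sub_cancel]

end Perturbation

theorem rtsr_eq_top {A : Type*} [NormedRing A] (h : ∀ n, ¬ Dense (Rg A n)) : rtsr A = ⊤ := by
  rw [rtsr, sInf_eq_top]
  rintro _ ⟨n, -, hn⟩
  exact absurd hn (h n)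

theorem Dense.exists_sum_mul_eq_one_norm_sub_lt {A : Type*} [NormedRing A] {n : ℕ}
    (h : Dense (Rg A n)) (x : Fin n → A) {ε : ℝ} (hε : 0 < ε) :
    ∃ a b : Fin n → A, ∑ i, a i * b i = 1 ∧ ∀ i, ‖a i - x i‖ < ε := by
  obtain ⟨a, ⟨b, hab⟩, hdist⟩ := h.exists_dist_lt x hε
  exact ⟨a, b, hab, fun i => by simpa [dist_eq_norm'] using (dist_pi_lt_iff hε).1 hdist i⟩

theorem mem_nestAlgebra_of_apply_mem {H : Type*} [NormedAddCommGroup H] [InnerProductSpace ℂ H]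
    {𝒩 : Set (Submodule ℂ H)} (h𝒩 : IsChain (· ≤ ·) 𝒩) {N : ℕ → Submodule ℂ H}
    (hmem : ∀ k, N k ∈ 𝒩) {T : H →L[ℂ] H} (hT : ∀ k x, (∀ j < k, x ∈ N j) → T x ∈ N k)
    (hT₀ : ∀ x, (∀ k, x ∈ N k) → T x = 0) : T ∈ nestAlgebra 𝒩 := by
  intro M hM x hx
  by_cases h : ∀ k, M ≤ N k
  · rw [hT₀ x fun k => h k hx]
    exact M.zero_mem
  · classical
    have h' := not_forall.1 h
    have hle : N (Nat.find h') ≤ M := (h𝒩.total (hmem _) hM).resolve_right (Nat.find_spec h')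
    exact hle (hT _ x fun j hj => not_not.1 (Nat.find_min h' hj) hx)

/-- If a nest contains a strictly decreasing sequence of subspaces, the right topological
stable rank of its nest algebra is infinite. -/
theorem stmt14 {H : Type*} [NormedAddCommGroup H] [InnerProductSpace ℂ H] [CompleteSpace H]
    [TopologicalSpace.SeparableSpace H]
    (𝒩 : Set (Submodule ℂ H)) (h𝒩 : IsNest 𝒩)
    (N : ℕ → Submodule ℂ H) (hmem : ∀ k, N k ∈ 𝒩) (hanti : StrictAnti N) :
    rtsr (nestAlgebra 𝒩) = ⊤ := by
  have hcl (k : ℕ) : IsClosed (N k : Set H) := h𝒩.isClosed _ (hmem k)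
  have hcl_iInf : IsClosed ((⨅ k, N k : Submodule ℂ H) : Set H) := by
    simpa using isClosed_iInter hcl
  have := hcl_iInf.completeSpace_coe
  refine rtsr_eq_top fun n hdense => ?_
  obtain ⟨e, he, heN⟩ := Submodule.exists_orthonormal_mem_layer hanti hcl
  obtain ⟨T, hT_lower, hT_zero, hT_norm, hT_perp, hT_orth⟩ :=
    Submodule.exists_shift_operators hanti.antitone hcl he heN n
  have hT_mem (i : Fin n) : T i ∈ nestAlgebra 𝒩 :=
    mem_nestAlgebra_of_apply_mem h𝒩.isChain hmem (hT_lower i) (hT_zero i)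
  have hε : (0 : ℝ) < ((n : ℝ) + 1)⁻¹ := by positivity
  obtain ⟨a, b, hab, ha⟩ := hdense.exists_sum_mul_eq_one_norm_sub_lt (fun i => ⟨T i, hT_mem i⟩) hε
  have key := one_le_card_mul_sq_of_sum_mul_eq_one (iInf_le N 0) (he.1 0)
    (Submodule.orthogonal_le (iInf_le N 1) (heN 0).2) hT_norm
    (fun i x hx => Submodule.inner_right_of_mem_orthogonal (hT_lower i 1 x (by simpa using hx))
      (heN 0).2)
    hT_perp hT_orth (a := fun i => a i) (b := fun i => b i)
    (fun i x hx => Submodule.mem_iInf _ |>.2 fun k =>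
      (a i).2 _ (hmem k) x (Submodule.mem_iInf _ |>.1 hx k))
    (fun i => (b i).2 _ (hmem 0) _ (heN 0).1) (fun i => (ha i).le)
    (by simpa using congrArg Subtype.val hab)
  have : (n : ℝ) * ((n : ℝ) + 1)⁻¹ ^ 2 < 1 := by
    rw [inv_pow, ← div_eq_mul_inv, div_lt_one (by positivity)]
    nlinarith
  exact this.not_ge key
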